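/- Let f be a homogeneous cubic polynomial on V, I ∈ V with f(I) = 1 and τ_{f,I} nondegenerate, and for A with f(A) ≠ 0 set H_A = τ_{f,I}^{-1} ∘ τ_{f,A} : V → V. Then H_I = Id_V, and the product A * B := −(1/2)·d_I(M ↦ H_M(B))(A) is commutative and satisfies I * B = B for all B ∈ V. -/

import Mathlib

set_option synthInstance.maxHeartbeats 1000000
set_option maxHeartbeats 1000000
set_option linter.unusedSectionVars false
set_option linter.unnecessarySimpa false

/-- The second logarithmic differential of the cubic with polarization `Q`:
`τ_{f,A}(z)(C) = 3 (2 f(A) Q z A C − 3 Q A A z · Q A A C) / f(A)²`,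
where `f A = Q A A A`. -/
noncomputable def tauQ {V : Type*} [AddCommGroup V] [Module ℂ V]
    (Q : V →ₗ[ℂ] V →ₗ[ℂ] V →ₗ[ℂ] ℂ) (A z C : V) : ℂ :=
  3 * (2 * Q A A A * Q z A C - 3 * Q A A z * Q A A C) / (Q A A A) ^ 2

section Aux

variable {V : Type*} [NormedAddCommGroup V] [NormedSpace ℂ V] [FiniteDimensional ℂ V]
  (Q : V →ₗ[ℂ] V →ₗ[ℂ] V →ₗ[ℂ] ℂ)

/-- `z ↦ tauQ Q I z C` as a linear map. -/
noncomputable def tauLin (I C : V) : V →ₗ[ℂ] ℂ where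
  toFun z := tauQ Q I z C
  map_add' x y := by
    simp only [tauQ, map_add, LinearMap.add_apply]; ring
  map_smul' c x := by
    simp only [tauQ, map_smul, LinearMap.smul_apply, smul_eq_mul, RingHom.id_apply]; ring

@[simp] lemma tauLin_apply (I C z : V) : tauLin Q I C z = tauQ Q I z C := rfl

/-- `z ↦ tauQ Q I z C` as a continuous linear map. -/
noncomputable def tauCLM (I C : V) : V →L[ℂ] ℂ :=
  LinearMap.toContinuousLinearMap (tauLin Q I C)

@[simp] lemma tauCLM_apply (I C z : V) : tauCLM Q I C z = tauQ Q I z C := by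
  simp [tauCLM]

/-- The trilinear form as a continuous (curried) map. -/
noncomputable def Qc1 : V →ₗ[ℂ] V →ₗ[ℂ] (V →L[ℂ] ℂ) :=
  Q.compr₂ (LinearMap.toContinuousLinearMap : (V →ₗ[ℂ] ℂ) ≃ₗ[ℂ] (V →L[ℂ] ℂ)).toLinearMap

noncomputable def Qc2 : V →ₗ[ℂ] (V →L[ℂ] V →L[ℂ] ℂ) where
  toFun M := LinearMap.toContinuousLinearMap (Qc1 Q M)
  map_add' x y := by simp only [map_add]
  map_smul' c x := by simp only [map_smul, RingHom.id_apply]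

noncomputable def Qc : V →L[ℂ] V →L[ℂ] V →L[ℂ] ℂ :=
  (LinearMap.toContinuousLinearMap (𝕜 := ℂ) (E := V) (F' := V →L[ℂ] V →L[ℂ] ℂ)) (Qc2 Q)

@[simp] lemma Qc_apply (a b c : V) : Qc Q a b c = Q a b c := by
  simp [Qc, Qc2, Qc1, LinearMap.compr₂_apply]

lemma cont_f : Continuous fun M : V => Q M M M := by
  have h : Continuous fun M : V => Qc Q M M M :=
    (((Qc Q).continuous.clm_apply continuous_id).clm_apply continuous_id)
  simpa using h

lemma polyDeriv (c0 c1 c2 c3 : ℂ) :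
    HasDerivAt (fun t : ℂ => c0 + c1 * t + c2 * t ^ 2 + c3 * t ^ 3) c1 0 := by
  have h : HasDerivAt (fun t : ℂ => c0 + c1 * t + c2 * t ^ 2 + c3 * t ^ 3)
      (c1 * 1 + c2 * ((2 : ℕ) * (0:ℂ) ^ (2 - 1)) + c3 * ((3 : ℕ) * (0:ℂ) ^ (3 - 1))) 0 := by
    exact ((((hasDerivAt_id (0:ℂ)).const_mul c1).const_add c0).add
        ((hasDerivAt_pow 2 (0:ℂ)).const_mul c2)).add
      ((hasDerivAt_pow 3 (0:ℂ)).const_mul c3)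
  simpa using h

/-- The canonical symmetric value of the derivative. -/
noncomputable def Dval (I A B C : V) : ℂ :=
  6 * Q A B C - 18 * Q A B I * Q I I C - 18 * Q A I I * Q B I C
    - 18 * Q B I I * Q A I C + 54 * Q A I I * Q B I I * Q I I C

lemma hasDerivAt_tau
    (hsymm1 : ∀ a b c : V, Q a b c = Q b a c)
    (hsymm2 : ∀ a b c : V, Q a b c = Q a c b)
    (I : V) (hI : Q I I I = 1) (A B C : V) :
    HasDerivAt (fun t : ℂ => tauQ Q (I + t • A) B C) (Dval Q I A B C) 0 := by
  have e1 : Q I A I = Q A I I := hsymm1 I A I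
  have e2 : Q I I A = Q A I I := (hsymm2 I I A).trans e1
  have e3 : Q A I A = Q A A I := hsymm2 A I A
  have e4 : Q I A A = Q A A I := (hsymm1 I A A).trans e3
  have e5 : Q I A B = Q A I B := hsymm1 I A B
  have e6 : Q A I B = Q A B I := hsymm2 A I B
  have e7 : Q I A C = Q A I C := hsymm1 I A C
  have e8 : Q I I B = Q B I I := (hsymm2 I I B).trans (hsymm1 I B I)
  have e9 : Q B A C = Q A B C := hsymm1 B A C
  set F : ℂ → ℂ := fun t => 1 + (3 * Q A I I) * t + (3 * Q A A I) * t ^ 2 + Q A A A * t ^ 3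
    with hFdef
  set G : ℂ → ℂ := fun t => Q B I C + Q A B C * t + 0 * t ^ 2 + 0 * t ^ 3 with hGdef
  set Hh : ℂ → ℂ := fun t => Q B I I + (2 * Q A B I) * t + Q A A B * t ^ 2 + 0 * t ^ 3 with hHdef
  set K : ℂ → ℂ := fun t => Q I I C + (2 * Q A I C) * t + Q A A C * t ^ 2 + 0 * t ^ 3 with hKdef
  have hM3 : ∀ t : ℂ, Q (I + t • A) (I + t • A) (I + t • A) = F t := by
    intro t
    simp only [hFdef, map_add, map_smul, LinearMap.add_apply, LinearMap.smul_apply,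
      smul_eq_mul, hI, e1, e2, e3, e4]
    ring
  have hMB : ∀ t : ℂ, Q (I + t • A) (I + t • A) B = Hh t := by
    intro t
    simp only [hHdef, map_add, map_smul, LinearMap.add_apply, LinearMap.smul_apply,
      smul_eq_mul, e5, e6, e8]
    ring
  have hMC : ∀ t : ℂ, Q (I + t • A) (I + t • A) C = K t := by
    intro t
    simp only [hKdef, map_add, map_smul, LinearMap.add_apply, LinearMap.smul_apply,
      smul_eq_mul, e7]
    ring
  have hBMC : ∀ t : ℂ, Q B (I + t • A) C = G t := by
    intro t
    simp only [hGdef, map_add, map_smul, LinearMap.add_apply, LinearMap.smul_apply,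
      smul_eq_mul, e9]
    ring
  have hfun : (fun t : ℂ => tauQ Q (I + t • A) B C)
      = fun t : ℂ => 3 * (2 * F t * G t - 3 * Hh t * K t) / (F t) ^ 2 := by
    funext t
    rw [tauQ, hM3 t, hMB t, hMC t, hBMC t]
  rw [hfun]
  have hF : HasDerivAt F (3 * Q A I I) 0 := polyDeriv _ _ _ _
  have hG : HasDerivAt G (Q A B C) 0 := polyDeriv _ _ _ _
  have hHh : HasDerivAt Hh (2 * Q A B I) 0 := polyDeriv _ _ _ _
  have hK : HasDerivAt K (2 * Q A I C) 0 := polyDeriv _ _ _ _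
  have hF0 : F 0 = 1 := by simp [hFdef]
  have hN : HasDerivAt (fun t => 3 * (2 * F t * G t - 3 * Hh t * K t))
      (3 * ((2 * (3 * Q A I I) * G 0 + 2 * F 0 * Q A B C)
        - (3 * (2 * Q A B I) * K 0 + 3 * Hh 0 * (2 * Q A I C)))) 0 := by
    exact ((((hF.const_mul 2).mul hG).sub ((hHh.const_mul 3).mul hK)).const_mul 3)
  have hD : HasDerivAt (fun t => (F t) ^ 2) ((2 : ℕ) * F 0 ^ 1 * (3 * Q A I I)) 0 := hF.pow 2
  have hdiv := hN.div hD (by rw [hF0]; norm_num)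
  refine hdiv.congr_deriv ?_
  have hG0 : G 0 = Q B I C := by simp [hGdef]
  have hH0 : Hh 0 = Q B I I := by simp [hHdef]
  have hK0 : K 0 = Q I I C := by simp [hKdef]
  rw [hF0, hG0, hH0, hK0, Dval]
  push_cast
  ring

end Aux

/-- Let `f` be the cubic of a symmetric trilinear `Q`, `I` a base
point with `f(I) = 1` and `τ_{f,I}` nondegenerate, and `H_A : V → V` (defined for
`f(A) ≠ 0`) characterized by `τ_{f,I}(H_A(z))(C) = τ_{f,A}(z)(C)`.  Then
`H_I = Id`, the product `A * B := −(1/2)·d_I(M ↦ H_M(B))(A)` is commutative, and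
`I * B = B` for all `B`. -/
theorem stmt14 {V : Type*} [NormedAddCommGroup V] [NormedSpace ℂ V]
    [FiniteDimensional ℂ V]
    (Q : V →ₗ[ℂ] V →ₗ[ℂ] V →ₗ[ℂ] ℂ)
    (hsymm1 : ∀ a b c : V, Q a b c = Q b a c)
    (hsymm2 : ∀ a b c : V, Q a b c = Q a c b)
    (I : V) (hI : Q I I I = 1)
    (hnondeg : ∀ z : V, (∀ C : V, tauQ Q I z C = 0) → z = 0)
    (H : V → V → V)
    (hH : ∀ A : V, Q A A A ≠ 0 → ∀ z C : V, tauQ Q I (H A z) C = tauQ Q A z C)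
    (hHsmooth : ∀ B : V, ContDiffOn ℂ ⊤ (fun M => H M B) {A : V | Q A A A ≠ 0}) :
    (∀ z : V, H I z = z) ∧
    (∀ A B : V,
      -(1/2 : ℂ) • deriv (fun t : ℂ => H (I + t • A) B) 0
        = -(1/2 : ℂ) • deriv (fun t : ℂ => H (I + t • B) A) 0) ∧
    (∀ B : V, -(1/2 : ℂ) • deriv (fun t : ℂ => H (I + t • I) B) 0 = B) := by
  have hIne : Q I I I ≠ 0 := by rw [hI]; exact one_ne_zero
  -- nondegeneracy in difference form
  have hsub : ∀ x y : V, (∀ C : V, tauQ Q I x C = tauQ Q I y C) → x = y := by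
    intro x y h
    have : ∀ C : V, tauQ Q I (x - y) C = 0 := by
      intro C
      have := (tauLin Q I C).map_sub x y
      simp only [tauLin_apply] at this
      rw [this, h C, sub_self]
    have := hnondeg _ this
    exact sub_eq_zero.mp this
  -- Part 1 : H I z = z
  have part1 : ∀ z : V, H I z = z := by
    intro z
    exact hsub _ _ (hH I hIne z)
  refine ⟨part1, ?_, ?_⟩
  · -- Part 2 : commutativity
    have hUopen : IsOpen {A : V | Q A A A ≠ 0} := by
      have := (cont_f Q).isOpen_preimage {(0:ℂ)}ᶜ isOpen_compl_singleton
      simpa [Set.preimage, Set.mem_compl_iff] using this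
    have hIU : I ∈ {A : V | Q A A A ≠ 0} := hIne
    -- key : for all A B C, tauQ Q I (deriv ...) C = Dval Q I A B C
    have key : ∀ A B : V,
        HasDerivAt (fun t : ℂ => H (I + t • A) B)
          (fderiv ℂ (fun M => H M B) I A) 0 ∧
        (∀ C : V, tauQ Q I (fderiv ℂ (fun M => H M B) I A) C = Dval Q I A B C) := by
      intro A B
      have hdiffG : DifferentiableAt ℂ (fun M => H M B) I :=
        ((hHsmooth B).contDiffAt (hUopen.mem_nhds hIU)).differentiableAt (by simp)
      have h0 : I + (0:ℂ) • A = I := by simp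
      have hline : HasDerivAt (fun t : ℂ => I + t • A) A 0 := by
        simpa using ((hasDerivAt_id (0:ℂ)).smul_const A).const_add I
      have hfd : HasFDerivAt (fun M => H M B) (fderiv ℂ (fun M => H M B) I) (I + (0:ℂ) • A) := by
        rw [h0]; exact hdiffG.hasFDerivAt
      have hw : HasDerivAt (fun t : ℂ => H (I + t • A) B)
          (fderiv ℂ (fun M => H M B) I A) 0 := by have := hfd.comp_hasDerivAt 0 hline; exact this
      refine ⟨hw, fun C => ?_⟩
      -- eventual nonvanishing
      have hcl : Continuous fun t : ℂ => I + t • A :=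
        continuous_const.add (continuous_id.smul continuous_const)
      have hev : ∀ᶠ t : ℂ in nhds 0, Q (I + t • A) (I + t • A) (I + t • A) ≠ 0 := by
        have hc : ContinuousAt (fun t : ℂ =>
            Q (I + t • A) (I + t • A) (I + t • A)) 0 :=
          ((cont_f Q).comp hcl).continuousAt
        apply hc.eventually_ne
        simpa [hI] using hIne
      have hLHS : HasDerivAt (fun t : ℂ => tauCLM Q I C (H (I + t • A) B))
          (tauCLM Q I C (fderiv ℂ (fun M => H M B) I A)) 0 :=
        (tauCLM Q I C).hasFDerivAt.comp_hasDerivAt 0 hw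
      have heq : (fun t : ℂ => tauQ Q (I + t • A) B C)
          =ᶠ[nhds (0:ℂ)] fun t : ℂ => tauCLM Q I C (H (I + t • A) B) := by
        filter_upwards [hev] with t ht
        rw [tauCLM_apply, hH _ ht B C]
      have hRHS : HasDerivAt (fun t : ℂ => tauQ Q (I + t • A) B C)
          (tauCLM Q I C (fderiv ℂ (fun M => H M B) I A)) 0 :=
        hLHS.congr_of_eventuallyEq heq
      have := hRHS.unique (hasDerivAt_tau Q hsymm1 hsymm2 I hI A B C)
      rw [← tauCLM_apply]
      exact this
    intro A B
    obtain ⟨hwA, hA⟩ := key A B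
    obtain ⟨hwB, hB⟩ := key B A
    have hDsymm : ∀ C : V, Dval Q I A B C = Dval Q I B A C := by
      intro C
      rw [Dval, Dval, hsymm1 B A C, hsymm1 B A I]
      ring
    have : fderiv ℂ (fun M => H M B) I A = fderiv ℂ (fun M => H M A) I B := by
      apply hsub
      intro C
      rw [hA C, hB C, hDsymm C]
    rw [hwA.deriv, hwB.deriv, this]
  · -- Part 3 : I * B = B
    intro B
    have hopen : IsOpen {t : ℂ | 1 + t ≠ 0} := by
      have : Continuous fun t : ℂ => 1 + t := continuous_const.add continuous_id
      have := this.isOpen_preimage {(0:ℂ)}ᶜ isOpen_compl_singleton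
      simpa [Set.preimage, Set.mem_compl_iff] using this
    have hmem : {t : ℂ | 1 + t ≠ 0} ∈ nhds (0:ℂ) :=
      hopen.mem_nhds (by norm_num)
    have heq : (fun t : ℂ => H (I + t • I) B)
        =ᶠ[nhds (0:ℂ)] fun t : ℂ => ((1 + t) ^ 2)⁻¹ • B := by
      filter_upwards [hmem] with t ht
      have hM : I + t • I = (1 + t) • I := by rw [add_smul, one_smul]
      have hfM : Q (I + t • I) (I + t • I) (I + t • I) ≠ 0 := by
        rw [hM]
        simp only [map_smul, LinearMap.smul_apply, smul_eq_mul, hI]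
        simpa using pow_ne_zero 3 ht
      apply hsub
      intro C
      rw [hH _ hfM B C, hM]
      rw [tauQ, tauQ]
      simp only [map_smul, LinearMap.smul_apply, smul_eq_mul, hI]
      field_simp
    have hmodel : HasDerivAt (fun t : ℂ => ((1 + t) ^ 2)⁻¹ • B)
        ((-((2:ℕ) * (1 + (0:ℂ)) ^ (2 - 1) * 1) / ((1 + (0:ℂ)) ^ 2) ^ 2) • B) 0 := by
      exact ((((hasDerivAt_id (0:ℂ)).const_add 1).pow 2).inv (by norm_num)).smul_const B
    rw [heq.deriv_eq, hmodel.deriv, smul_smul]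
    norm_num
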